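/- If Γ is a d-collapsible simplicial complex and every nonface of Γ has dimension at least d, then Γ is chordal (d-chordal for every positive integer t). -/

import Mathlib

namespace ChordalPaper

/-- A simplicial complex on vertex set `Fin n`: a family of finsets closed under subsets. -/
def IsComplex {n : ℕ} (Γ : Set (Finset (Fin n))) : Prop :=
  ∀ F ∈ Γ, ∀ F' ⊆ F, F' ∈ Γ

/-- The `d`-closure `Δ_d(Γ)`: all subsets of size `≤ d`, together with all subsets
all of whose `(d+1)`-element subsets are faces of `Γ`. -/
def dClosure {n : ℕ} (d : ℕ) (Γ : Set (Finset (Fin n))) : Set (Finset (Fin n)) :=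
  {F | F.card ≤ d ∨ ∀ G ⊆ F, G.card = d + 1 → G ∈ Γ}

/-- The pure `(d-1)`-skeleton `⟨[n]⟩^{[d-1]}` of the full simplex: all subsets of size `≤ d`. -/
def fullSkel (n d : ℕ) : Set (Finset (Fin n)) := {F | F.card ≤ d}

/-- A facet: a maximal face. -/
def IsFacet {n : ℕ} (Γ : Set (Finset (Fin n))) (F : Finset (Fin n)) : Prop :=
  F ∈ Γ ∧ ∀ G ∈ Γ, F ⊆ G → G = F

/-- A free face: a face contained in a unique facet. -/
def IsFreeFace {n : ℕ} (Γ : Set (Finset (Fin n))) (E : Finset (Fin n)) : Prop :=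
  E ∈ Γ ∧ ∃! F, IsFacet Γ F ∧ E ⊆ F

/-- Collapse at `E`: remove all faces containing `E` (including `E` itself). -/
def collapseFace {n : ℕ} (Γ : Set (Finset (Fin n))) (E : Finset (Fin n)) :
    Set (Finset (Fin n)) := {F ∈ Γ | ¬ E ⊆ F}

/-- Successive collapses along a list of faces. -/
def collapseList {n : ℕ} (Γ : Set (Finset (Fin n))) :
    List (Finset (Fin n)) → Set (Finset (Fin n))
  | [] => Γ
  | E :: L => collapseList (collapseFace Γ E) L

/-- A free sequence: each face is free in the complex obtained by collapsing the previous ones. -/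
def IsFreeSeq {n : ℕ} (Γ : Set (Finset (Fin n))) : List (Finset (Fin n)) → Prop
  | [] => True
  | E :: L => IsFreeFace Γ E ∧ IsFreeSeq (collapseFace Γ E) L

/-- `d`-collapsibility: a sequence of elementary `d`-collapsings (at free faces of
dimension `< d`, i.e. cardinality `≤ d`) reduces `Γ` to the void complex. -/
def Collapsible {n : ℕ} (d : ℕ) (Γ : Set (Finset (Fin n))) : Prop :=
  ∃ L : List (Finset (Fin n)),
    IsFreeSeq Γ L ∧ (∀ E ∈ L, E.card ≤ d) ∧ collapseList Γ L = ∅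

/-- Simplicial deletion `Γ∖E`: remove all faces strictly containing `E` (keeping `E`). -/
def srDel {n : ℕ} (Γ : Set (Finset (Fin n))) (E : Finset (Fin n)) :
    Set (Finset (Fin n)) := {F ∈ Γ | ¬ E ⊂ F}

/-- Successive simplicial deletions along a list of faces. -/
def srDelList {n : ℕ} (Γ : Set (Finset (Fin n))) :
    List (Finset (Fin n)) → Set (Finset (Fin n))
  | [] => Γ
  | E :: L => srDelList (srDel Γ E) L

/-- A simplicial order for a `d`-closure on `Fin n`: a sequence of non-facet free faces of
cardinality `d` whose successive simplicial deletions reduce the complex to the pure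
`(d-1)`-skeleton of the full simplex. -/
def IsSimpOrder {n : ℕ} (d : ℕ) (Γ : Set (Finset (Fin n))) :
    List (Finset (Fin n)) → Prop
  | [] => Γ = fullSkel n d
  | E :: L => E.card = d ∧ IsFreeFace Γ E ∧ ¬ IsFacet Γ E ∧ IsSimpOrder d (srDel Γ E) L

/-- `Γ` is `d`-chordal: its `d`-closure equals the pure `(d-1)`-skeleton of the full
simplex or admits a simplicial order. -/
def DChordal {n : ℕ} (d : ℕ) (Γ : Set (Finset (Fin n))) : Prop :=
  ∃ L, IsSimpOrder d (dClosure d Γ) L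

/-- A minimal nonface of `Γ`. -/
def IsMinNonface {n : ℕ} (Γ : Set (Finset (Fin n))) (F : Finset (Fin n)) : Prop :=
  F ∉ Γ ∧ ∀ G ⊂ F, G ∈ Γ

end ChordalPaper

/-! An elementary collapse at a free face `E` with `E.card ≤ t` and unique facet `F` removes from
the `t`-closure exactly the interval of faces `G` with `E ⊆ G ⊆ F` and `t < G.card`. Such an
interval can also be removed by simplicial deletions at `t`-faces: split it along a vertex of
`F \ E` until its bottom has `t` elements. Induction along the collapsing sequence then gives a
simplicial order of the `t`-closure for every `t ≥ d`. For `t < d` every `(t+1)`-set is a face, so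
the `t`-closure is the full simplex, which is also the `t`-closure of the collapsible full simplex.
-/

namespace ChordalPaper

variable {n : ℕ}

def HasSimpOrder (t : ℕ) (Δ : Set (Finset (Fin n))) : Prop :=
  ∃ L, IsSimpOrder t Δ L

def interval (t : ℕ) (E F : Finset (Fin n)) : Set (Finset (Fin n)) :=
  {G | E ⊆ G ∧ G ⊆ F ∧ t < G.card}

section Interval

variable {t : ℕ} {Δ : Set (Finset (Fin n))} {E F : Finset (Fin n)}

lemma interval_eq_empty (h : F.card ≤ t) : interval t E F = ∅ := by
  refine Set.eq_empty_of_forall_notMem fun G ⟨_, hGF, hG⟩ => ?_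
  have := Finset.card_le_card hGF
  omega

lemma interval_eq_union (x : Fin n) :
    interval t E F = interval t (insert x E) F ∪ interval t E (F.erase x) := by
  ext G
  simp only [interval, Set.mem_ofPred_eq, Set.mem_union]
  constructor
  · rintro ⟨hEG, hGF, hG⟩
    by_cases hxG : x ∈ G
    · exact Or.inl ⟨Finset.insert_subset hxG hEG, hGF, hG⟩
    · exact Or.inr ⟨hEG, Finset.subset_erase.2 ⟨hGF, hxG⟩, hG⟩
  · rintro (⟨hEG, hGF, hG⟩ | ⟨hEG, hGF, hG⟩)
    · exact ⟨(Finset.subset_insert x E).trans hEG, hGF, hG⟩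
    · exact ⟨hEG, hGF.trans (Finset.erase_subset x F), hG⟩

lemma srDel_eq_diff_interval (hE : E.card = t) (hup : ∀ G ∈ Δ, E ⊆ G → t < G.card → G ⊆ F) :
    srDel Δ E = Δ \ interval t E F := by
  ext G
  have hlt : E ⊂ G ↔ E ⊆ G ∧ t < G.card := by
    refine ⟨fun h => ⟨h.subset, hE ▸ Finset.card_lt_card h⟩, fun ⟨hEG, hG⟩ => ?_⟩
    exact Finset.ssubset_iff_subset_ne.2 ⟨hEG, by rintro rfl; omega⟩
  simp only [srDel, interval, Set.mem_sdiff, Set.mem_ofPred_eq, hlt]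
  exact ⟨fun ⟨hG, h⟩ => ⟨hG, fun ⟨hEG, _, hc⟩ => h ⟨hEG, hc⟩⟩,
    fun ⟨hG, h⟩ => ⟨hG, fun ⟨hEG, hc⟩ => h ⟨hEG, hup G hG hEG hc, hc⟩⟩⟩

lemma hasSimpOrder_of_card_eq (hE : E.card = t) (hF : t < F.card) (hEΔ : E ∈ Δ) (hFΔ : F ∈ Δ)
    (hEF : E ⊆ F) (hup : ∀ G ∈ Δ, E ⊆ G → t < G.card → G ⊆ F)
    (h : HasSimpOrder t (Δ \ interval t E F)) : HasSimpOrder t Δ := by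
  have hsub : ∀ G ∈ Δ, E ⊆ G → G ⊆ F := fun G hG hEG => by
    rcases (Finset.card_le_card hEG).eq_or_lt with hc | hc
    · rwa [← Finset.eq_of_subset_of_card_le hEG hc.ge]
    · exact hup G hG hEG (hE ▸ hc)
  have hfacet : IsFacet Δ F := ⟨hFΔ, fun G hG hFG =>
    (hup G hG (hEF.trans hFG) (hF.trans_le (Finset.card_le_card hFG))).antisymm hFG⟩
  have hfree : IsFreeFace Δ E := ⟨hEΔ, F, ⟨hfacet, hEF⟩,
    fun F' ⟨hF', hEF'⟩ => (hF'.2 F hFΔ (hsub F' hF'.1 hEF')).symm⟩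
  have hnotFacet : ¬ IsFacet Δ E := fun hfacetE => by
    have := hfacetE.2 F hFΔ hEF
    subst this
    omega
  obtain ⟨L, hL⟩ := h
  exact ⟨E :: L, hE, hfree, hnotFacet, srDel_eq_diff_interval hE hup ▸ hL⟩

theorem hasSimpOrder_of_diff_interval (Δ : Set (Finset (Fin n))) (E F : Finset (Fin n))
    (hEF : E ⊆ F) (hE : E.card ≤ t) (hIcc : Set.Icc E F ⊆ Δ)
    (hup : ∀ G ∈ Δ, E ⊆ G → t < G.card → G ⊆ F)
    (h : HasSimpOrder t (Δ \ interval t E F)) : HasSimpOrder t Δ := by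
  rcases le_or_gt F.card t with hF | hF
  · rwa [interval_eq_empty hF, Set.sdiff_empty] at h
  rcases hE.eq_or_lt with hE | hE
  · exact hasSimpOrder_of_card_eq hE hF (hIcc ⟨le_rfl, hEF⟩) (hIcc ⟨hEF, le_rfl⟩) hEF hup h
  obtain ⟨x, hxF, hxE⟩ : ∃ x ∈ F, x ∉ E := Finset.not_subset.1 fun hFE => by
    have := Finset.card_le_card hFE
    omega
  have hxEcard := Finset.card_insert_of_notMem hxE
  have hFxcard := Finset.card_erase_of_mem hxF
  have hupper : HasSimpOrder t (Δ \ interval t (insert x E) F) := by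
    refine hasSimpOrder_of_diff_interval _ E (F.erase x) (Finset.subset_erase.2 ⟨hEF, hxE⟩)
      hE.le (fun G ⟨hEG, hGF⟩ => ⟨hIcc ⟨hEG, hGF.trans (Finset.erase_subset x F)⟩, ?_⟩)
      (fun G hG hEG hc => Finset.subset_erase.2 ⟨hup G hG.1 hEG hc, fun hxG =>
        hG.2 ⟨Finset.insert_subset hxG hEG, hup G hG.1 hEG hc, hc⟩⟩)
      (by rwa [Set.sdiff_sdiff, ← interval_eq_union])
    exact fun ⟨hxEG, _, _⟩ => (Finset.subset_erase.1 hGF).2 (hxEG (Finset.mem_insert_self x E))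
  exact hasSimpOrder_of_diff_interval Δ (insert x E) F (Finset.insert_subset hxF hEF) (by omega)
    (fun G ⟨hEG, hGF⟩ => hIcc ⟨(Finset.subset_insert x E).trans hEG, hGF⟩)
    (fun G hG hEG hc => hup G hG ((Finset.subset_insert x E).trans hEG) hc) hupper
termination_by F.card - E.card

end Interval

section Closure

variable {t : ℕ} {Δ : Set (Finset (Fin n))} {E F : Finset (Fin n)}

lemma exists_isFacet_superset {G : Finset (Fin n)} (hG : G ∈ Δ) : ∃ F, IsFacet Δ F ∧ G ⊆ F := by
  obtain ⟨F, ⟨hFΔ, hGF⟩, hmax⟩ := Set.Finite.exists_maximalFor Finset.card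
    {H | H ∈ Δ ∧ G ⊆ H} (Set.toFinite _) ⟨G, hG, le_rfl⟩
  refine ⟨F, ⟨hFΔ, fun K hK hFK => ?_⟩, hGF⟩
  exact (Finset.eq_of_subset_of_card_le hFK
    (hmax ⟨hK, hGF.trans hFK⟩ (Finset.card_le_card hFK))).symm

lemma IsFreeFace.exists_isFacet_forall_subset (h : IsFreeFace Δ E) :
    ∃ F, IsFacet Δ F ∧ ∀ G ∈ Δ, E ⊆ G → G ⊆ F := by
  obtain ⟨-, F, ⟨hF, -⟩, huniq⟩ := h
  refine ⟨F, hF, fun G hG hEG => ?_⟩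
  obtain ⟨F', hF', hGF'⟩ := exists_isFacet_superset hG
  exact huniq F' ⟨hF', hEG.trans hGF'⟩ ▸ hGF'

lemma IsComplex.collapseFace (hΔ : IsComplex Δ) : IsComplex (collapseFace Δ E) :=
  fun _ ⟨hG, hEG⟩ G' hG' => ⟨hΔ _ hG G' hG', fun hEG' => hEG (hEG'.trans hG')⟩

lemma IsComplex.subset_dClosure (hΔ : IsComplex Δ) : Δ ⊆ dClosure t Δ :=
  fun _ hG => Or.inr fun H hH _ => hΔ _ hG H hH

lemma dClosure_empty : dClosure t (∅ : Set (Finset (Fin n))) = fullSkel n t := by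
  ext G
  refine ⟨fun h => h.elim id fun hG => show G.card ≤ t from not_lt.1 fun hGt => ?_, Or.inl⟩
  obtain ⟨H, hHG, hH⟩ := Finset.exists_subset_card_eq (show t + 1 ≤ G.card from hGt)
  exact hG H hHG hH

/-- A face of the closure that contains `E` and is larger than `t` lies in `F`, because each of
its vertices lies together with `E` in a `(t+1)`-face. -/
lemma subset_of_mem_dClosure (hE : E.card ≤ t) (hF : ∀ G ∈ Δ, E ⊆ G → G ⊆ F)
    {G : Finset (Fin n)} (hG : G ∈ dClosure t Δ) (hEG : E ⊆ G) (hGt : t < G.card) : G ⊆ F := by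
  intro y hy
  obtain ⟨H, hyEH, hHG, hH⟩ := Finset.exists_subsuperset_card_eq (Finset.insert_subset hy hEG)
    ((Finset.card_insert_le y E).trans (by omega)) hGt
  have hHΔ : H ∈ Δ := (hG.resolve_left (by omega)) H hHG hH
  exact hF H hHΔ ((Finset.subset_insert y E).trans hyEH) (hyEH (Finset.mem_insert_self y E))

lemma dClosure_collapseFace (hE : E.card ≤ t) (hF : ∀ G ∈ Δ, E ⊆ G → G ⊆ F) :
    dClosure t (collapseFace Δ E) = dClosure t Δ \ interval t E F := by
  ext G
  by_cases hGt : G.card ≤ t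
  · exact ⟨fun _ => ⟨Or.inl hGt, fun ⟨_, _, hc⟩ => by omega⟩, fun _ => Or.inl hGt⟩
  constructor
  · intro h
    have hfaces := h.resolve_left hGt
    refine ⟨Or.inr fun H hHG hH => (hfaces H hHG hH).1, fun ⟨hEG, _, _⟩ => ?_⟩
    obtain ⟨H, hEH, hHG, hH⟩ := Finset.exists_subsuperset_card_eq (n := t + 1) hEG (by omega) (by omega)
    exact (hfaces H hHG hH).2 hEH
  · rintro ⟨h, hGI⟩
    refine Or.inr fun H hHG hH => ⟨h.resolve_left hGt H hHG hH, fun hEH => hGI ?_⟩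
    have hEG := hEH.trans hHG
    exact ⟨hEG, subset_of_mem_dClosure hE hF h hEG (by omega), by omega⟩

theorem hasSimpOrder_dClosure_of_isFreeSeq :
    ∀ {Δ : Set (Finset (Fin n))} (L : List (Finset (Fin n))), IsComplex Δ → IsFreeSeq Δ L →
      (∀ E ∈ L, E.card ≤ t) → collapseList Δ L = ∅ → HasSimpOrder t (dClosure t Δ)
  | Δ, [], _, _, _, hL => by
    rw [show Δ = ∅ from hL, dClosure_empty]
    exact ⟨[], rfl⟩
  | Δ, E :: L, hΔ, ⟨hfree, hseq⟩, hcard, hL => by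
    obtain ⟨F, hF, hsub⟩ := hfree.exists_isFacet_forall_subset
    have hE := hcard E List.mem_cons_self
    refine hasSimpOrder_of_diff_interval _ E F (hsub E hfree.1 subset_rfl) hE
      (fun G ⟨_, hGF⟩ => hΔ.subset_dClosure (hΔ F hF.1 G hGF))
      (fun G hG hEG hGt => subset_of_mem_dClosure hE hsub hG hEG hGt) ?_
    rw [← dClosure_collapseFace hE hsub]
    exact hasSimpOrder_dClosure_of_isFreeSeq L hΔ.collapseFace hseq
      (fun E' hE' => hcard E' (List.mem_cons_of_mem E hE')) hL

theorem dChordal_of_collapsible (hΔ : IsComplex Δ) (h : Collapsible t Δ) : DChordal t Δ :=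
  let ⟨L, hseq, hcard, hL⟩ := h
  hasSimpOrder_dClosure_of_isFreeSeq L hΔ hseq hcard hL

end Closure

lemma Collapsible.mono {d t : ℕ} {Δ : Set (Finset (Fin n))} (hdt : d ≤ t) (h : Collapsible d Δ) :
    Collapsible t Δ :=
  let ⟨L, hseq, hcard, hL⟩ := h
  ⟨L, hseq, fun E hE => (hcard E hE).trans hdt, hL⟩

lemma isComplex_univ : IsComplex (Set.univ : Set (Finset (Fin n))) :=
  fun _ _ _ _ => Set.mem_univ _

lemma collapsible_zero_univ : Collapsible 0 (Set.univ : Set (Finset (Fin n))) := by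
  have hfacet : IsFacet Set.univ (Finset.univ : Finset (Fin n)) :=
    ⟨Set.mem_univ _, fun G _ hG => Finset.univ_subset_iff.1 hG⟩
  refine ⟨[∅], ⟨⟨Set.mem_univ _, Finset.univ, ⟨hfacet, Finset.empty_subset _⟩, ?_⟩, trivial⟩,
    by simp, ?_⟩
  · exact fun F ⟨hF, _⟩ => (hF.2 _ (Set.mem_univ _) (Finset.subset_univ F)).symm
  · ext G
    simp [collapseList, collapseFace]

lemma dClosure_eq_univ {t : ℕ} {Δ : Set (Finset (Fin n))}
    (h : ∀ G : Finset (Fin n), G.card = t + 1 → G ∈ Δ) : dClosure t Δ = Set.univ :=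
  Set.eq_univ_of_forall fun _ => Or.inr fun H _ hH => h H hH

end ChordalPaper

open ChordalPaper in
theorem stmt13_general (n d : ℕ) (Γ : Set (Finset (Fin n))) (hΓ : IsComplex Γ)
    (hcol : Collapsible d Γ)
    (hnf : ∀ F : Finset (Fin n), F ∉ Γ → d + 1 ≤ F.card) :
    ∀ t, 1 ≤ t → DChordal t Γ := by
  intro t _
  rcases le_or_gt d t with hdt | htd
  · exact dChordal_of_collapsible hΓ (hcol.mono hdt)
  · have hfaces : ∀ G : Finset (Fin n), G.card = t + 1 → G ∈ Γ := fun G hG =>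
      by_contra fun hGΓ => by have := hnf G hGΓ; omega
    have hclosure : dClosure t Γ = dClosure t Set.univ := by
      rw [dClosure_eq_univ hfaces, dClosure_eq_univ fun _ _ => Set.mem_univ _]
    unfold DChordal
    rw [hclosure]
    exact dChordal_of_collapsible isComplex_univ (collapsible_zero_univ.mono t.zero_le)

open ChordalPaper in
/-- a `d`-collapsible complex all of whose nonfaces have dimension `≥ d`
is chordal, i.e. `t`-chordal for every positive `t`. -/
theorem stmt13 (n d : ℕ) (hd : 1 ≤ d) (Γ : Set (Finset (Fin n))) (hΓ : IsComplex Γ)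
    (hcol : Collapsible d Γ)
    (hnf : ∀ F : Finset (Fin n), F ∉ Γ → d + 1 ≤ F.card) :
    ∀ t, 1 ≤ t → DChordal t Γ :=
  stmt13_general n d Γ hΓ hcol hnf
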